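/- Let A, B be nonempty compact subsets of ℝ^d, h ∈ ℝ^d, α ∈ A, β ∈ B, and Λ a translation-invariant locally finite measure on hyperplanes. Then |Λ([A | T_h B]) − Λ([α | β + h])| ≤ Λ([conv A]) + Λ([conv B]), where [A|B] is the set of hyperplanes strictly separating A and B, [K] the set of hyperplanes hitting K, and T_h B = B + h. -/

import Mathlib

open MeasureTheory Filter
open scoped RealInnerProductSpace Topology

/-- The space of (parametrized) affine hyperplanes of `ℝ^d`: a pair `(u, r)` of a unit
vector and a real number corresponds to the hyperplane `{x : ⟨x,u⟩ = r}`. -/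
abbrev HypSp (d : ℕ) := (Metric.sphere (0 : EuclideanSpace ℝ (Fin d)) 1) × ℝ

/-- The set of hyperplanes hitting a set `K`. -/
def hits {d : ℕ} (K : Set (EuclideanSpace ℝ (Fin d))) : Set (HypSp d) :=
  {p | ∃ x ∈ K, ⟪x, (p.1 : EuclideanSpace ℝ (Fin d))⟫ = p.2}

/-- The set of hyperplanes strictly separating the points `x` and `y`. -/
def sepPts {d : ℕ} (x y : EuclideanSpace ℝ (Fin d)) : Set (HypSp d) :=
  {p | (⟪x, (p.1 : EuclideanSpace ℝ (Fin d))⟫ - p.2) *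
        (⟪y, (p.1 : EuclideanSpace ℝ (Fin d))⟫ - p.2) < 0}

/-- The set of hyperplanes strictly separating the sets `A` and `B`. -/
def sepSets {d : ℕ} (A B : Set (EuclideanSpace ℝ (Fin d))) : Set (HypSp d) :=
  {p | ((∀ a ∈ A, ⟪a, (p.1 : EuclideanSpace ℝ (Fin d))⟫ < p.2) ∧
          ∀ b ∈ B, p.2 < ⟪b, (p.1 : EuclideanSpace ℝ (Fin d))⟫) ∨
       ((∀ b ∈ B, ⟪b, (p.1 : EuclideanSpace ℝ (Fin d))⟫ < p.2) ∧
          ∀ a ∈ A, p.2 < ⟪a, (p.1 : EuclideanSpace ℝ (Fin d))⟫)}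

/-- The action of the translation `T_h` on hyperplanes. -/
noncomputable def hypTrans {d : ℕ} (h : EuclideanSpace ℝ (Fin d)) (p : HypSp d) : HypSp d :=
  (p.1, p.2 + ⟪h, (p.1 : EuclideanSpace ℝ (Fin d))⟫)

/-- A measure on hyperplanes is translation invariant (stationary) if it is invariant
under every translation of `ℝ^d`. -/
def TransInvariant {d : ℕ} (Λ : Measure (HypSp d)) : Prop :=
  ∀ h : EuclideanSpace ℝ (Fin d), Measure.map (hypTrans h) Λ = Λ

/-- A measure on hyperplanes is locally finite if the set of hyperplanes hitting any
compact set has finite measure. -/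
def LocFiniteHyp {d : ℕ} (Λ : Measure (HypSp d)) : Prop :=
  ∀ K : Set (EuclideanSpace ℝ (Fin d)), IsCompact K → Λ (hits K) ≠ ⊤


/-!
Every hyperplane strictly separating the sets `A` and `B + h` separates the points `α` and
`β + h`. Conversely, a hyperplane separating the points but not the sets has a point of `A` or
of `B + h` on the wrong side; since convex hulls are connected, the intermediate value theorem
then makes it hit `conv A` or `conv (B + h)`. Translation invariance gives
`Λ([conv (B + h)]) = Λ([conv B])`, and local finiteness makes every measure involved finite.
-/

section Hyperplanes

variable {d : ℕ}

lemma hits_mono {K L : Set (EuclideanSpace ℝ (Fin d))} (hKL : K ⊆ L) : hits K ⊆ hits L :=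
  fun _ ⟨x, hx, hxp⟩ => ⟨x, hKL hx, hxp⟩

lemma LocFiniteHyp.measure_hits_ne_top {Λ : Measure (HypSp d)} (hΛ : LocFiniteHyp Λ)
    {K : Set (EuclideanSpace ℝ (Fin d))} (hK : Bornology.IsBounded K) : Λ (hits K) ≠ ⊤ := by
  obtain ⟨R, hR⟩ := hK.subset_closedBall 0
  exact ne_top_of_le_ne_top (hΛ _ (isCompact_closedBall 0 R)) (measure_mono (hits_mono hR))

lemma mem_hits_convexHull {K : Set (EuclideanSpace ℝ (Fin d))} {p : HypSp d}
    {x y : EuclideanSpace ℝ (Fin d)} (hx : x ∈ K) (hy : y ∈ K)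
    (hxp : ⟪x, (p.1 : EuclideanSpace ℝ (Fin d))⟫ ≤ p.2)
    (hpy : p.2 ≤ ⟪y, (p.1 : EuclideanSpace ℝ (Fin d))⟫) : p ∈ hits (convexHull ℝ K) := by
  obtain ⟨z, hz, hzp⟩ := (convex_convexHull ℝ K).isPreconnected.intermediate_value
    (subset_convexHull ℝ K hx) (subset_convexHull ℝ K hy)
    (continuous_id.inner continuous_const).continuousOn ⟨hxp, hpy⟩
  exact ⟨z, hz, hzp⟩

lemma inner_lt_of_notMem_hits_convexHull {K : Set (EuclideanSpace ℝ (Fin d))} {p : HypSp d}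
    (hp : p ∉ hits (convexHull ℝ K)) {x y : EuclideanSpace ℝ (Fin d)}
    (hx : x ∈ K) (hxp : ⟪x, (p.1 : EuclideanSpace ℝ (Fin d))⟫ < p.2) (hy : y ∈ K) :
    ⟪y, (p.1 : EuclideanSpace ℝ (Fin d))⟫ < p.2 :=
  lt_of_not_ge fun hpy => hp (mem_hits_convexHull hx hy hxp.le hpy)

lemma lt_inner_of_notMem_hits_convexHull {K : Set (EuclideanSpace ℝ (Fin d))} {p : HypSp d}
    (hp : p ∉ hits (convexHull ℝ K)) {x y : EuclideanSpace ℝ (Fin d)}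
    (hx : x ∈ K) (hpx : p.2 < ⟪x, (p.1 : EuclideanSpace ℝ (Fin d))⟫) (hy : y ∈ K) :
    p.2 < ⟪y, (p.1 : EuclideanSpace ℝ (Fin d))⟫ :=
  lt_of_not_ge fun hyp => hp (mem_hits_convexHull hy hx hyp hpx.le)

lemma sepPts_subset_hits_convexHull (x y : EuclideanSpace ℝ (Fin d)) :
    sepPts x y ⊆ hits (convexHull ℝ {x, y}) := by
  intro p hp
  rw [sepPts, Set.mem_ofPred_eq] at hp
  rcases mul_neg_iff.1 hp with ⟨hx, hy⟩ | ⟨hx, hy⟩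
  · exact mem_hits_convexHull (by simp) (by simp) (sub_neg.1 hy).le (sub_pos.1 hx).le
  · exact mem_hits_convexHull (by simp) (by simp) (sub_neg.1 hx).le (sub_pos.1 hy).le

lemma LocFiniteHyp.measure_sepPts_ne_top {Λ : Measure (HypSp d)} (hΛ : LocFiniteHyp Λ)
    (x y : EuclideanSpace ℝ (Fin d)) : Λ (sepPts x y) ≠ ⊤ :=
  ne_top_of_le_ne_top
    (hΛ.measure_hits_ne_top (isBounded_convexHull.2 (Set.toFinite _).isBounded))
    (measure_mono (sepPts_subset_hits_convexHull x y))

lemma sepSets_subset_sepPts {A B : Set (EuclideanSpace ℝ (Fin d))}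
    {a b : EuclideanSpace ℝ (Fin d)} (ha : a ∈ A) (hb : b ∈ B) : sepSets A B ⊆ sepPts a b := by
  rintro p (⟨hA, hB⟩ | ⟨hB, hA⟩)
  · exact mul_neg_of_neg_of_pos (sub_neg.2 (hA a ha)) (sub_pos.2 (hB b hb))
  · exact mul_neg_of_pos_of_neg (sub_pos.2 (hA a ha)) (sub_neg.2 (hB b hb))

lemma sepPts_subset_sepSets_union {A B : Set (EuclideanSpace ℝ (Fin d))}
    {a b : EuclideanSpace ℝ (Fin d)} (ha : a ∈ A) (hb : b ∈ B) :
    sepPts a b ⊆ sepSets A B ∪ hits (convexHull ℝ A) ∪ hits (convexHull ℝ B) := by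
  intro p hp
  rw [sepPts, Set.mem_ofPred_eq] at hp
  by_contra hcon
  simp only [Set.mem_union, not_or] at hcon
  obtain ⟨⟨hsep, hpA⟩, hpB⟩ := hcon
  apply hsep
  rcases mul_neg_iff.1 hp with ⟨hpa, hbp⟩ | ⟨hap, hpb⟩
  · exact Or.inr ⟨fun _ => inner_lt_of_notMem_hits_convexHull hpB hb (sub_neg.1 hbp),
      fun _ => lt_inner_of_notMem_hits_convexHull hpA ha (sub_pos.1 hpa)⟩
  · exact Or.inl ⟨fun _ => inner_lt_of_notMem_hits_convexHull hpA ha (sub_neg.1 hap),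
      fun _ => lt_inner_of_notMem_hits_convexHull hpB hb (sub_pos.1 hpb)⟩

lemma continuous_hypTrans (h : EuclideanSpace ℝ (Fin d)) : Continuous (hypTrans h) :=
  continuous_fst.prodMk (continuous_snd.add
    (continuous_const.inner (continuous_subtype_val.comp continuous_fst)))

noncomputable def hypTransEquiv (h : EuclideanSpace ℝ (Fin d)) : HypSp d ≃ᵐ HypSp d where
  toFun := hypTrans h
  invFun := hypTrans (-h)
  left_inv p := by simp [hypTrans, inner_neg_left]
  right_inv p := by simp [hypTrans, inner_neg_left]
  measurable_toFun := (continuous_hypTrans h).measurable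
  measurable_invFun := (continuous_hypTrans (-h)).measurable

lemma preimage_hypTrans_hits (h : EuclideanSpace ℝ (Fin d))
    (K : Set (EuclideanSpace ℝ (Fin d))) :
    hypTrans h ⁻¹' hits ((· + h) '' K) = hits K := by
  ext p
  simp only [hits, hypTrans, Set.mem_preimage, Set.mem_ofPred_eq, Set.mem_image,
    exists_exists_and_eq_and, inner_add_left, add_left_inj]

lemma TransInvariant.measure_hits_image_add {Λ : Measure (HypSp d)} (hΛ : TransInvariant Λ)
    (h : EuclideanSpace ℝ (Fin d)) (K : Set (EuclideanSpace ℝ (Fin d))) :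
    Λ (hits ((· + h) '' K)) = Λ (hits K) := by
  conv_lhs => rw [← hΛ h]
  rw [← preimage_hypTrans_hits h K]
  exact MeasurableEquiv.map_apply (hypTransEquiv h) _

end Hyperplanes

lemma convexHull_image_add_right {E : Type*} [AddCommGroup E] [Module ℝ E] (h : E)
    (s : Set E) :
    convexHull ℝ ((· + h) '' s) = (· + h) '' convexHull ℝ s := by
  simpa [add_comm] using ((AffineEquiv.constVAdd ℝ E h).toAffineMap.image_convexHull s).symm

open ENNReal in
lemma abs_toReal_sub_le_of_le_add {a b c e : ℝ≥0∞} (hb : b ≠ ⊤) (hc : c ≠ ⊤) (he : e ≠ ⊤)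
    (hab : a ≤ b) (hba : b ≤ a + c + e) : |a.toReal - b.toReal| ≤ c.toReal + e.toReal := by
  have ha : a ≠ ⊤ := ne_top_of_le_ne_top hb hab
  have := ENNReal.toReal_mono (by finiteness) hba
  rw [ENNReal.toReal_add (by finiteness) he, ENNReal.toReal_add ha hc] at this
  rw [abs_of_nonpos (sub_nonpos.2 (ENNReal.toReal_mono hb hab))]
  linarith

theorem stmt8_general {d : ℕ} (Λ : Measure (HypSp d))
    (hinv : TransInvariant Λ) (hfin : LocFiniteHyp Λ)
    (A B : Set (EuclideanSpace ℝ (Fin d))) (hA : IsCompact A) (hB : IsCompact B)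
    (h α β : EuclideanSpace ℝ (Fin d)) (hα : α ∈ A) (hβ : β ∈ B) :
    |(Λ (sepSets A ((· + h) '' B))).toReal - (Λ (sepPts α (β + h))).toReal|
      ≤ (Λ (hits (convexHull ℝ A))).toReal + (Λ (hits (convexHull ℝ B))).toReal := by
  have hβh : β + h ∈ (· + h) '' B := Set.mem_image_of_mem _ hβ
  have hconvB : Λ (hits (convexHull ℝ ((· + h) '' B))) = Λ (hits (convexHull ℝ B)) := by
    rw [convexHull_image_add_right, hinv.measure_hits_image_add]
  have hupper : Λ (sepPts α (β + h)) ≤ Λ (sepSets A ((· + h) '' B))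
      + Λ (hits (convexHull ℝ A)) + Λ (hits (convexHull ℝ B)) := calc
    _ ≤ Λ (sepSets A ((· + h) '' B) ∪ hits (convexHull ℝ A)
          ∪ hits (convexHull ℝ ((· + h) '' B))) :=
      measure_mono (sepPts_subset_sepSets_union hα hβh)
    _ ≤ _ := (measure_union_le _ _).trans (add_le_add (measure_union_le _ _) hconvB.le)
  refine abs_toReal_sub_le_of_le_add ?_ ?_ ?_
    (measure_mono (sepSets_subset_sepPts hα hβh)) hupper
  · exact hfin.measure_sepPts_ne_top _ _
  · exact hfin.measure_hits_ne_top (isBounded_convexHull.2 hA.isBounded)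
  · exact hfin.measure_hits_ne_top (isBounded_convexHull.2 hB.isBounded)

/-- For nonempty compacts `A, B`, `h ∈ ℝ^d`, `α ∈ A`, `β ∈ B`, and a
translation-invariant locally finite hyperplane measure `Λ`:
`|Λ([A|T_h B]) − Λ([α|β+h])| ≤ Λ([conv A]) + Λ([conv B])`. -/
theorem stmt8 {d : ℕ} (Λ : Measure (HypSp d))
    (hinv : TransInvariant Λ) (hfin : LocFiniteHyp Λ)
    (A B : Set (EuclideanSpace ℝ (Fin d))) (hA : IsCompact A) (hB : IsCompact B)
    (hAne : A.Nonempty) (hBne : B.Nonempty)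
    (h α β : EuclideanSpace ℝ (Fin d)) (hα : α ∈ A) (hβ : β ∈ B) :
    |(Λ (sepSets A ((· + h) '' B))).toReal - (Λ (sepPts α (β + h))).toReal|
      ≤ (Λ (hits (convexHull ℝ A))).toReal + (Λ (hits (convexHull ℝ B))).toReal :=
  stmt8_general Λ hinv hfin A B hA hB h α β hα hβ
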